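/- arXiv:1508.05847 — 5 statements merged into one kernel-verified Lean document; each statement's English description precedes it below -/
import Mathlib

section
/- For every real number x ≥ 0 and every integer j ≥ 0, the doubly infinite series ∑_{n∈ℤ} e^{−2x} I_{|n|}(2x) n^{2j} converges and satisfies ∑_{n∈ℤ} e^{−2x} I_{|n|}(2x) n^{2j} ≤ ((4j)!/(2j)!) · max(x^j, 1). (Proposition 'bessel.moment' of the paper.) -/
/-- The modified Bessel function of the first kind of nonnegative integer order `n`,
defined by the everywhere-convergent series
`I_n(x) = ∑_{j=0}^∞ (x/2)^(2j+n) / (j! (j+n)!)`. -/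
noncomputable def besselI (n : ℕ) (x : ℝ) : ℝ :=
  ∑' j : ℕ, (x / 2) ^ (2 * j + n) / ((Nat.factorial j : ℝ) * (Nat.factorial (j + n) : ℝ))

/-!
The weights `e^{-2x} I_{|n|}(2x)` form the Skellam distribution: they are the law of `A - B` for
independent Poisson(x) variables `A`, `B`, since `x^a/a! * x^b/b!` summed over `a - b = n` is
`I_{|n|}(2x)`. Multiplying the exponential series of `x e^t` and `x e^{-t}` therefore gives the
generating function `∑ₙ e^{-2x} I_{|n|}(2x) cosh(tn) = exp(2x(cosh t - 1))`. As
`u^{2j} ≤ (2j)! cosh u`, the `2j`-th moment is at most `(2j)! t^{-2j} exp(2x(cosh t - 1))` for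
every `t`. The choice `t² = 1 / max(1, x)` keeps the exponential below `6 ≤ C(4j, 2j)` and turns
`t^{-2j}` into `max(x^j, 1)`, and `(2j)! C(4j, 2j) = (4j)!/(2j)!`; for `j = 0` take `t = 0`.
-/

open Real Nat

def diffMinEquiv : ℕ × ℕ ≃ ℤ × ℕ where
  toFun p := ((p.1 : ℤ) - p.2, min p.1 p.2)
  invFun q := (q.2 + q.1.toNat, q.2 + (-q.1).toNat)
  left_inv := by rintro ⟨a, b⟩; simp only [Prod.mk.injEq]; omega
  right_inv := by rintro ⟨n, k⟩; simp only [Prod.mk.injEq]; omega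

lemma hasSum_pow_div_factorial_mul_pow_div_factorial (c d : ℝ) :
    HasSum (fun p : ℕ × ℕ => c ^ p.1 / (p.1 ! : ℝ) * (d ^ p.2 / (p.2 ! : ℝ)))
      (exp c * exp d) := by
  have hasSum_exp (y : ℝ) : HasSum (fun n => y ^ n / (n ! : ℝ)) (exp y) := by
    rw [exp_eq_exp_ℝ]
    exact NormedSpace.expSeries_div_hasSum_exp y
  have hc := NormedSpace.norm_expSeries_div_summable c
  have hd := NormedSpace.norm_expSeries_div_summable d
  have hcd := summable_mul_of_summable_norm hc hd
  exact (hasSum_exp c).mul (hasSum_exp d) hcd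

lemma pow_div_factorial_mul_pow_div_factorial_diffMinEquiv_symm (x t : ℝ) (n : ℤ) (k : ℕ) :
    (x * exp t) ^ (diffMinEquiv.symm (n, k)).1 / (diffMinEquiv.symm (n, k)).1 ! *
      ((x * exp (-t)) ^ (diffMinEquiv.symm (n, k)).2 / (diffMinEquiv.symm (n, k)).2 !) =
      x ^ (2 * k + n.natAbs) / (k ! * (k + n.natAbs)!) * exp (t * n) := by
  obtain ⟨m, rfl | rfl⟩ := Int.eq_nat_or_neg n
  · simp only [diffMinEquiv, Equiv.coe_fn_symm_mk, Int.toNat_natCast, Int.natAbs_natCast,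
      Int.toNat_neg_natCast, add_zero, mul_pow, ← exp_nat_mul]
    rw [show t * (m : ℤ) = (k + m : ℕ) * t + k * -t by push_cast; ring, exp_add]
    ring
  · simp only [diffMinEquiv, Equiv.coe_fn_symm_mk, neg_neg, Int.toNat_natCast, Int.natAbs_neg,
      Int.natAbs_natCast, Int.toNat_neg_natCast, add_zero, mul_pow, ← exp_nat_mul]
    rw [show t * ((-m : ℤ) : ℝ) = k * t + (k + m : ℕ) * -t by push_cast; ring, exp_add]
    ring

theorem hasSum_besselI_mul_exp (x t : ℝ) :
    HasSum (fun n : ℤ => besselI n.natAbs (2 * x) * exp (t * n)) (exp (2 * x * cosh t)) := by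
  set F : ℕ × ℕ → ℝ := fun p => (x * exp t) ^ p.1 / p.1 ! * ((x * exp (-t)) ^ p.2 / p.2 !)
  have hF : HasSum (F ∘ diffMinEquiv.symm) (exp (2 * x * cosh t)) := by
    have h2cosh : 2 * x * cosh t = x * exp t + x * exp (-t) := by rw [cosh_eq]; ring
    rw [diffMinEquiv.symm.hasSum_iff, h2cosh, exp_add]
    exact hasSum_pow_div_factorial_mul_pow_div_factorial _ _
  refine hF.prod_fiberwise fun n => ?_
  have fiber_tsum :
      ∑' k, F (diffMinEquiv.symm (n, k)) = besselI n.natAbs (2 * x) * exp (t * n) := by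
    simp only [F, pow_div_factorial_mul_pow_div_factorial_diffMinEquiv_symm, besselI,
      mul_div_cancel_left₀ x two_ne_zero, tsum_mul_right]
  exact fiber_tsum ▸ (hF.summable.prod_factor n).hasSum

theorem hasSum_exp_mul_besselI_mul_cosh (x t : ℝ) :
    HasSum (fun n : ℤ => exp (-(2 * x)) * besselI n.natAbs (2 * x) * cosh (t * n))
      (exp (2 * x * (cosh t - 1))) := by
  have h := ((hasSum_besselI_mul_exp x t).add (hasSum_besselI_mul_exp x (-t))).div_const 2
  rw [cosh_neg, add_self_div_two] at h
  have hterm (n : ℤ) : exp (-(2 * x)) * besselI n.natAbs (2 * x) * cosh (t * n) =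
      exp (-(2 * x)) * ((besselI n.natAbs (2 * x) * exp (t * n) +
        besselI n.natAbs (2 * x) * exp (-t * n)) / 2) := by
    rw [cosh_eq, neg_mul]; ring
  rw [funext hterm, mul_sub, mul_one, sub_eq_neg_add, exp_add]
  exact h.mul_left _

lemma besselI_nonneg {x : ℝ} (hx : 0 ≤ x) (n : ℕ) : 0 ≤ besselI n x :=
  tsum_nonneg fun _ => by positivity

lemma pow_two_mul_le_factorial_mul_cosh (u : ℝ) (j : ℕ) :
    u ^ (2 * j) ≤ (2 * j)! * cosh u := by
  have h := le_hasSum (hasSum_cosh u) j fun i _ =>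
    div_nonneg ((even_two_mul i).pow_nonneg u) (by positivity)
  rwa [div_le_iff₀' (by positivity)] at h

lemma exp_mul_besselI_mul_pow_le {x : ℝ} (hx : 0 ≤ x) (j : ℕ) (t : ℝ) (n : ℤ) :
    exp (-(2 * x)) * besselI n.natAbs (2 * x) * (t * n) ^ (2 * j) ≤
      (2 * j)! * (exp (-(2 * x)) * besselI n.natAbs (2 * x) * cosh (t * n)) := by
  rw [mul_left_comm]
  have := besselI_nonneg (by positivity : 0 ≤ 2 * x) n.natAbs
  exact mul_le_mul_of_nonneg_left (pow_two_mul_le_factorial_mul_cosh _ j) (by positivity)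

theorem summable_exp_mul_besselI_mul_pow {x : ℝ} (hx : 0 ≤ x) (j : ℕ) :
    Summable fun n : ℤ => exp (-(2 * x)) * besselI n.natAbs (2 * x) * (n : ℝ) ^ (2 * j) := by
  refine .of_nonneg_of_le (fun n => ?_) (fun n => ?_)
    ((hasSum_exp_mul_besselI_mul_cosh x 1).summable.mul_left ((2 * j)! : ℝ))
  · have := besselI_nonneg (by positivity : 0 ≤ 2 * x) n.natAbs
    have := (even_two_mul j).pow_nonneg (n : ℝ)
    positivity
  · simpa using exp_mul_besselI_mul_pow_le hx j 1 n

theorem pow_mul_tsum_exp_mul_besselI_mul_pow_le {x : ℝ} (hx : 0 ≤ x) (j : ℕ) (t : ℝ) :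
    t ^ (2 * j) * ∑' n : ℤ, exp (-(2 * x)) * besselI n.natAbs (2 * x) * (n : ℝ) ^ (2 * j) ≤
      (2 * j)! * exp (2 * x * (cosh t - 1)) := by
  refine hasSum_le (fun n => ?_) ((summable_exp_mul_besselI_mul_pow hx j).hasSum.mul_left _)
    ((hasSum_exp_mul_besselI_mul_cosh x t).mul_left _)
  exact (exp_mul_besselI_mul_pow_le hx j t n).trans_eq' (by ring)

lemma exp_two_mul_mul_cosh_sub_one_le_six {x t : ℝ} (hx : 0 ≤ x) (ht : t ^ 2 ≤ 1)
    (hxt : x * t ^ 2 ≤ 1) : exp (2 * x * (cosh t - 1)) ≤ 6 := by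
  have exp_le {y : ℝ} (hy0 : 0 ≤ y) (hy1 : y ≤ 1) : exp y ≤ 1 + y + y ^ 2 := by
    have := abs_le.mp (abs_exp_sub_one_sub_id_le (abs_le.mpr ⟨by linarith, hy1⟩))
    linarith [this.2]
  have hcosh : cosh t - 1 ≤ 3 / 4 * t ^ 2 := by
    have := exp_le (by positivity : 0 ≤ t ^ 2 / 2) (by linarith)
    nlinarith [cosh_le_exp_half_sq t, sq_nonneg t]
  have hhalf := exp_le (by norm_num : (0 : ℝ) ≤ 1 / 2) (by norm_num)
  have hexponent : 2 * x * (cosh t - 1) ≤ 3 * (1 / 2) := by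
    nlinarith [mul_le_mul_of_nonneg_left hcosh (by positivity : 0 ≤ 2 * x)]
  calc exp (2 * x * (cosh t - 1)) ≤ exp (3 * (1 / 2)) := exp_le_exp.mpr hexponent
    _ = exp (1 / 2) ^ 3 := by rw [← exp_nat_mul]; norm_num
    _ ≤ (1 + 1 / 2 + (1 / 2) ^ 2) ^ 3 := by gcongr
    _ ≤ 6 := by norm_num

lemma six_le_choose_four_mul_two_mul {j : ℕ} (hj : 1 ≤ j) : 6 ≤ (4 * j).choose (2 * j) :=
  calc 6 = choose 4 2 := rfl
    _ ≤ choose (4 * j) 2 := choose_le_choose 2 (by omega)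
    _ ≤ choose (4 * j) (4 * j / 2) := choose_le_middle 2 (4 * j)
    _ = (4 * j).choose (2 * j) := by congr 1; omega

lemma factorial_four_mul_div_factorial_two_mul (j : ℕ) :
    ((4 * j)! : ℝ) / (2 * j)! = (4 * j).choose (2 * j) * (2 * j)! := by
  rw [div_eq_iff (by positivity), show 4 * j = 2 * j + 2 * j by ring,
    ← add_choose_mul_factorial_mul_factorial (2 * j) (2 * j)]
  push_cast
  ring

/-- Moment bound for the spectral measure of the SEP kernel: for `x ≥ 0` and `j ≥ 0`,
the series `∑_{n ∈ ℤ} e^{−2x} I_{|n|}(2x) n^{2j}` converges and is bounded by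
`((4j)!/(2j)!) max(x^j, 1)`. -/
theorem besselI_moment (x : ℝ) (hx : 0 ≤ x) (j : ℕ) :
    Summable (fun n : ℤ => Real.exp (-(2 * x)) * besselI n.natAbs (2 * x) * (n : ℝ) ^ (2 * j)) ∧
    ∑' n : ℤ, Real.exp (-(2 * x)) * besselI n.natAbs (2 * x) * (n : ℝ) ^ (2 * j) ≤
      ((Nat.factorial (4 * j) : ℝ) / (Nat.factorial (2 * j) : ℝ)) * max (x ^ j) 1 := by
  refine ⟨summable_exp_mul_besselI_mul_pow hx j, ?_⟩
  rcases Nat.eq_zero_or_pos j with rfl | hj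
  · simpa using pow_mul_tsum_exp_mul_besselI_mul_pow_le hx 0 0
  set m := max 1 x
  have hm : 1 ≤ m := le_max_left 1 x
  have hmj : m ^ j = max (x ^ j) 1 := by
    rcases le_total 1 x with h | h
    · simp [m, h, one_le_pow₀ h]
    · simp [m, h, pow_le_one₀ hx h]
  have ht : (√m)⁻¹ ^ 2 = m⁻¹ := by rw [inv_pow, sq_sqrt (by positivity)]
  have hbound := pow_mul_tsum_exp_mul_besselI_mul_pow_le hx j (√m)⁻¹
  have hexp := exp_two_mul_mul_cosh_sub_one_le_six hx (t := (√m)⁻¹)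
    (by rw [ht]; exact inv_le_one_of_one_le₀ hm)
    (by rw [ht, ← div_eq_mul_inv, div_le_one (by positivity)]; exact le_max_right 1 x)
  rw [pow_mul, ht, inv_pow, inv_mul_le_iff₀ (by positivity)] at hbound
  rw [factorial_four_mul_div_factorial_two_mul, ← hmj]
  have h6 : (6 : ℝ) ≤ (4 * j).choose (2 * j) := by exact_mod_cast six_le_choose_four_mul_two_mul hj
  calc _ ≤ m ^ j * ((2 * j)! * exp (2 * x * (cosh (√m)⁻¹ - 1))) := hbound
    _ ≤ m ^ j * ((2 * j)! * (4 * j).choose (2 * j)) := by gcongr; linarith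
    _ = _ := by ring
end

section
/- For an integer n ≥ 0, define f_n(x) = √x · e^{−x} · I_n(x) for x ≥ 0. Then f_n is monotonically increasing on [0, n + 1/2] when n = 0 or n = 1, and f_n is monotonically increasing on all of [0, ∞) when n ≥ 2. (Proposition 'bessel.increasing' of the paper.) -/
open Real Finset
open scoped Nat

theorem mul_tsum_le_tsum_of_antidiagonal {q p : ℕ → ℝ} {t : ℝ} (ht : 0 ≤ t)
    (hq0 : ∀ j, 0 ≤ q j) (hp0 : ∀ j, 0 ≤ p j) (hq : Summable q) (hp : Summable p)
    (h : ∀ k, t ^ 2 * ∑ ij ∈ antidiagonal k, q ij.1 * q ij.2 ≤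
      ∑ ij ∈ antidiagonal (k + 1), p ij.1 * p ij.2) :
    t * ∑' j, q j ≤ ∑' j, p j := by
  have hqn : Summable fun j => ‖q j‖ := hq.norm
  have hpn : Summable fun j => ‖p j‖ := hp.norm
  have hQ : Summable fun k => ∑ ij ∈ antidiagonal k, q ij.1 * q ij.2 :=
    (summable_norm_sum_mul_antidiagonal_of_summable_norm hqn hqn).of_norm
  have hP : Summable fun k => ∑ ij ∈ antidiagonal k, p ij.1 * p ij.2 :=
    (summable_norm_sum_mul_antidiagonal_of_summable_norm hpn hpn).of_norm
  rw [mul_self_le_mul_self_iff (mul_nonneg ht (tsum_nonneg hq0)) (tsum_nonneg hp0),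
    mul_mul_mul_comm, tsum_mul_tsum_eq_tsum_sum_antidiagonal_of_summable_norm hqn hqn,
    tsum_mul_tsum_eq_tsum_sum_antidiagonal_of_summable_norm hpn hpn, hP.tsum_eq_zero_add,
    ← sq, ← tsum_mul_left]
  exact le_add_of_nonneg_of_le (sum_nonneg fun _ _ => mul_nonneg (hp0 _) (hp0 _))
    (Summable.tsum_le_tsum h (hQ.mul_left _) (hP.comp_injective (add_left_injective 1)))

theorem sum_antidiagonal_choose_mul_choose (n k : ℕ) :
    ∑ p ∈ antidiagonal k, k.choose p.1 * (k + 2 * n).choose (p.1 + n) = (k + n).centralBinom := by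
  rw [Nat.centralBinom_eq_two_mul_choose, show 2 * (k + n) = k + (k + 2 * n) by ring,
    Nat.add_choose_eq, Nat.sum_antidiagonal_eq_sum_range_succ_mk,
    Nat.sum_antidiagonal_eq_sum_range_succ_mk]
  refine sum_subset_zero_on_sdiff (range_subset_range.mpr (by omega)) (fun i hi => ?_)
    (fun i hi => ?_)
  · simp only [mem_sdiff, mem_range] at hi
    rw [Nat.choose_eq_zero_of_lt (by omega), zero_mul]
  · rw [mem_range] at hi
    rw [← Nat.choose_symm (by omega : i + n ≤ k + 2 * n)]
    congr 2
    omega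

theorem monotoneOn_sqrt_mul_exp_neg_mul_pow (m : ℕ) :
    MonotoneOn (fun x : ℝ => √x * exp (-x) * x ^ m) (Set.Icc 0 (m + 1 / 2)) := by
  rintro x ⟨hx0, -⟩ y ⟨-, hym⟩ hxy
  rcases hx0.eq_or_lt with rfl | hx
  · simp only [sqrt_zero, zero_mul]
    exact mul_nonneg (mul_nonneg (sqrt_nonneg y) (exp_pos _).le) (pow_nonneg (by linarith) m)
  have hy : 0 < y := hx.trans_le hxy
  have hlog : y - x ≤ (m + 1 / 2) * (log y - log x) := by
    have h := one_sub_inv_le_log_of_pos (div_pos hy hx)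
    rw [inv_div, log_div hy.ne' hx.ne'] at h
    calc y - x = y * (1 - x / y) := by field_simp
      _ ≤ y * (log y - log x) := mul_le_mul_of_nonneg_left h hy.le
      _ ≤ (m + 1 / 2) * (log y - log x) :=
        mul_le_mul_of_nonneg_right hym (sub_nonneg.mpr (log_le_log hx hxy))
  dsimp only
  rw [← log_le_log_iff (by positivity) (by positivity), log_mul (by positivity) (by positivity),
    log_mul (by positivity) (by positivity), log_mul (by positivity) (by positivity),
    log_mul (by positivity) (by positivity), log_exp, log_exp, log_pow, log_pow, log_sqrt hx.le,
    log_sqrt hy.le]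
  linarith

noncomputable def besselCoeff (n j : ℕ) : ℝ := ((2 : ℝ) ^ (2 * j + n) * j ! * (j + n)!)⁻¹

/-- The coefficient of `x ^ (2k + 2n)` in `I_n(x) ^ 2`. -/
noncomputable def besselSqCoeff (n k : ℕ) : ℝ :=
  ∑ p ∈ antidiagonal k, besselCoeff n p.1 * besselCoeff n p.2

theorem besselCoeff_pos (n j : ℕ) : 0 < besselCoeff n j := by
  unfold besselCoeff; positivity

theorem two_mul_succ_mul_besselCoeff_succ (n j : ℕ) :
    2 * (j + 1) * besselCoeff n (j + 1) = besselCoeff (n + 1) j := by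
  unfold besselCoeff
  rw [show 2 * (j + 1) + n = 2 * j + (n + 1) + 1 by ring, show j + 1 + n = j + (n + 1) by ring,
    Nat.factorial_succ j, pow_succ]
  push_cast
  field_simp

theorem besselI_eq_tsum (n : ℕ) (x : ℝ) :
    besselI n x = ∑' j, besselCoeff n j * x ^ (2 * j + n) := by
  unfold besselI besselCoeff
  congr 1 with j
  rw [div_pow, div_div, mul_assoc, mul_comm, div_eq_inv_mul]

theorem besselCoeff_mul_mul_pow_le {x : ℝ} (hx : 0 ≤ x) (n j : ℕ) :
    besselCoeff n j * (2 * j + n + 1) * x ^ (2 * j + n) ≤ x ^ n * ((x ^ 2) ^ j / j !) := by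
  have hpow : (2 * j + n + 1 : ℝ) ≤ 2 ^ (2 * j + n) := by
    exact_mod_cast Nat.lt_two_pow_self
  have hfact : (1 : ℝ) ≤ (j + n)! := mod_cast Nat.one_le_iff_ne_zero.mpr (Nat.factorial_ne_zero _)
  calc besselCoeff n j * (2 * j + n + 1) * x ^ (2 * j + n)
      = (2 * j + n + 1) / 2 ^ (2 * j + n) * (x ^ n * ((x ^ 2) ^ j / j !)) / (j + n)! := by
        unfold besselCoeff; field_simp; ring
    _ ≤ 1 * (x ^ n * ((x ^ 2) ^ j / j !)) / 1 := by
        gcongr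
        exact div_le_one_of_le₀ hpow (by positivity)
    _ = x ^ n * ((x ^ 2) ^ j / j !) := by ring

theorem summable_besselCoeff_mul_mul_pow (n : ℕ) {x : ℝ} (hx : 0 ≤ x) :
    Summable fun j => besselCoeff n j * (2 * j + n + 1) * x ^ (2 * j + n) :=
  .of_nonneg_of_le (fun j => by have := besselCoeff_pos n j; positivity)
    (besselCoeff_mul_mul_pow_le hx n) ((summable_pow_div_factorial _).mul_left _)

theorem summable_besselCoeff_mul_pow (n : ℕ) {x : ℝ} (hx : 0 ≤ x) :
    Summable fun j => besselCoeff n j * x ^ (2 * j + n) := by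
  refine .of_nonneg_of_le (fun j => by have := besselCoeff_pos n j; positivity) (fun j => ?_)
    (summable_besselCoeff_mul_mul_pow n hx)
  have := besselCoeff_pos n j
  gcongr
  exact le_mul_of_one_le_right this.le (by linarith)

theorem hasDerivAt_besselI (n : ℕ) (x : ℝ) :
    HasDerivAt (besselI n)
      (∑' j, besselCoeff n j * ((2 * j + n : ℕ) * x ^ (2 * j + n - 1))) x := by
  set R := |x| + 1
  have hR : 1 ≤ R := by simp [R]
  have hxR : ∀ y, |y| ≤ |x| → y ∈ Set.Ioo (-R) R := fun y hy =>
    abs_lt.mp (by simp only [R]; linarith)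
  rw [show besselI n = fun y => ∑' j, besselCoeff n j * y ^ (2 * j + n) from
    funext (besselI_eq_tsum n)]
  refine hasDerivAt_tsum_of_isPreconnected
    (u := fun j => besselCoeff n j * (2 * j + n + 1) * R ^ (2 * j + n))
    (g := fun j y => besselCoeff n j * y ^ (2 * j + n))
    (g' := fun j y => besselCoeff n j * ((2 * j + n : ℕ) * y ^ (2 * j + n - 1)))
    (summable_besselCoeff_mul_mul_pow n (by linarith))
    isOpen_Ioo isPreconnected_Ioo (fun j y _ => (hasDerivAt_pow _ y).const_mul _)
    (fun j y hy => ?_) (hxR |x| (abs_abs x).le) (summable_besselCoeff_mul_pow n (abs_nonneg x))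
    (hxR x le_rfl)
  have hy : |y| ≤ R := (abs_lt.mpr hy).le
  have := besselCoeff_pos n j
  rw [norm_mul, norm_mul, Real.norm_of_nonneg this.le, norm_pow, Real.norm_natCast,
    Real.norm_eq_abs]
  push_cast
  calc besselCoeff n j * ((2 * j + n) * |y| ^ (2 * j + n - 1))
      ≤ besselCoeff n j * ((2 * j + n + 1) * R ^ (2 * j + n)) := by
        gcongr _ * (?_ * ?_)
        · linarith
        · calc |y| ^ (2 * j + n - 1) ≤ R ^ (2 * j + n - 1) := by gcongr
            _ ≤ R ^ (2 * j + n) := pow_le_pow_right₀ hR (Nat.sub_le _ _)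
    _ = _ := by ring

theorem differentiable_besselI (n : ℕ) : Differentiable ℝ (besselI n) :=
  fun x => (hasDerivAt_besselI n x).differentiableAt

theorem mul_deriv_besselI (n : ℕ) (x : ℝ) :
    x * deriv (besselI n) x = ∑' j, besselCoeff n j * (2 * j + n) * x ^ (2 * j + n) := by
  rw [(hasDerivAt_besselI n x).deriv, ← tsum_mul_left]
  congr 1 with j
  -- the constant term has the truncated exponent `0 - 1 = 0`, but a zero coefficient
  rcases Nat.eq_zero_or_pos (2 * j + n) with h | h
  · obtain ⟨rfl, rfl⟩ : j = 0 ∧ n = 0 := by omega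
    simp
  · rw [mul_left_comm, mul_left_comm x, ← pow_succ', Nat.sub_add_cancel h]; push_cast; ring

theorem besselSqCoeff_eq (n k : ℕ) :
    besselSqCoeff n k =
      (k + n).centralBinom * ((2 : ℝ) ^ (2 * k + 2 * n) * k ! * (k + 2 * n)!)⁻¹ := by
  rw [besselSqCoeff, ← sum_antidiagonal_choose_mul_choose, Nat.cast_sum, sum_mul]
  refine sum_congr rfl fun ⟨i, j⟩ hij => ?_
  rw [HasAntidiagonal.mem_antidiagonal] at hij
  subst hij
  have hfact (a b : ℕ) : ((a + b).choose a * a ! * b ! : ℝ) = (a + b)! := by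
    rw [Nat.choose_symm_add]; exact_mod_cast Nat.add_choose_mul_factorial_mul_factorial a b
  have hchoose (a b : ℕ) : ((a + b).choose a : ℝ) ≠ 0 := mod_cast (Nat.choose_pos (by omega)).ne'
  have := hchoose i j
  have := hchoose (i + n) (j + n)
  rw [show i + j + 2 * n = (i + n) + (j + n) by ring, Nat.cast_mul, ← hfact i j,
    ← hfact (i + n) (j + n)]
  unfold besselCoeff
  field_simp
  ring

theorem besselSqCoeff_succ (n k : ℕ) :
    2 * (k + 1) * (k + 2 * n + 1) * (k + n + 1) * besselSqCoeff n (k + 1) =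
      (2 * k + 2 * n + 1) * besselSqCoeff n k := by
  have hcb : ((k + n + 1) * (k + n + 1).centralBinom : ℝ) =
      2 * (2 * (k + n) + 1) * (k + n).centralBinom :=
    mod_cast Nat.succ_mul_centralBinom_succ (k + n)
  rw [besselSqCoeff_eq, besselSqCoeff_eq, show k + 1 + n = k + n + 1 by ring,
    show k + 1 + 2 * n = k + 2 * n + 1 by ring, Nat.factorial_succ k,
    Nat.factorial_succ (k + 2 * n), show 2 * (k + 1) + 2 * n = 2 * k + 2 * n + 2 by ring, pow_add]
  push_cast
  field_simp
  linear_combination hcb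

theorem four_mul_sum_antidiagonal_mul_besselCoeff (n k : ℕ) :
    4 * (k + 2 * n + 1) * ∑ p ∈ antidiagonal (k + 1),
      ((p.1 : ℝ) * p.2) * (besselCoeff n p.1 * besselCoeff n p.2) = k * besselSqCoeff n k := by
  cases k with
  | zero => simp [Nat.sum_antidiagonal_succ]
  | succ l =>
    have hshift : ∑ p ∈ antidiagonal (l + 2),
        ((p.1 : ℝ) * p.2) * (besselCoeff n p.1 * besselCoeff n p.2) =
          besselSqCoeff (n + 1) l / 4 := by
      rw [Nat.sum_antidiagonal_succ, Nat.sum_antidiagonal_succ', besselSqCoeff, sum_div]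
      simp only [Nat.cast_zero, zero_mul, mul_zero, zero_add, Nat.cast_add, Nat.cast_one]
      refine sum_congr rfl fun p _ => ?_
      rw [← two_mul_succ_mul_besselCoeff_succ, ← two_mul_succ_mul_besselCoeff_succ]
      ring
    rw [hshift, besselSqCoeff_eq, besselSqCoeff_eq, show l + (n + 1) = l + 1 + n by ring,
      show 2 * l + 2 * (n + 1) = 2 * (l + 1) + 2 * n by ring,
      show l + 2 * (n + 1) = l + 1 + 2 * n + 1 by ring, Nat.factorial_succ (l + 1 + 2 * n),
      Nat.factorial_succ l]
    push_cast
    field_simp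

theorem four_mul_besselSqCoeff_le {n : ℕ} (hn : 1 ≤ n) (k : ℕ) :
    4 * besselSqCoeff n k ≤ ∑ p ∈ antidiagonal (k + 1),
      ((4 * p.1 + 2 * n + 1) * (4 * p.2 + 2 * n + 1) : ℝ) *
        (besselCoeff n p.1 * besselCoeff n p.2) := by
  have hT := four_mul_sum_antidiagonal_mul_besselCoeff n k
  set T := ∑ p ∈ antidiagonal (k + 1), ((p.1 : ℝ) * p.2) * (besselCoeff n p.1 * besselCoeff n p.2)
  have hsplit : ∑ p ∈ antidiagonal (k + 1),
      ((4 * p.1 + 2 * n + 1) * (4 * p.2 + 2 * n + 1) : ℝ) *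
        (besselCoeff n p.1 * besselCoeff n p.2) =
      16 * T + (2 * n + 1) * (4 * k + 2 * n + 5) * besselSqCoeff n (k + 1) := by
    rw [besselSqCoeff, mul_sum, mul_sum, ← sum_add_distrib]
    refine sum_congr rfl fun p hp => ?_
    have hp : (p.1 : ℝ) + p.2 = k + 1 := mod_cast HasAntidiagonal.mem_antidiagonal.mp hp
    linear_combination 4 * (2 * n + 1) * (besselCoeff n p.1 * besselCoeff n p.2) * hp
  have hS : 0 ≤ besselSqCoeff n k :=
    sum_nonneg fun p _ => mul_nonneg (besselCoeff_pos n p.1).le (besselCoeff_pos n p.2).le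
  have hn' : (0 : ℝ) ≤ 2 * n - 1 := by
    have : (1 : ℝ) ≤ n := mod_cast hn
    linarith
  have hA : (0 : ℝ) < 2 * (k + 1) * (k + 2 * n + 1) * (k + n + 1) := by positivity
  rw [hsplit, ← sub_nonneg, ← mul_nonneg_iff_of_pos_left hA]
  have key : 2 * (k + 1) * (k + 2 * n + 1) * (k + n + 1) *
      (16 * T + (2 * n + 1) * (4 * k + 2 * n + 5) * besselSqCoeff n (k + 1) -
        4 * besselSqCoeff n k) =
      (2 * n + 1) * (2 * n - 1) * (2 * k + 2 * n + 3) * besselSqCoeff n k := by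
    linear_combination (8 * (k + 1) * (k + n + 1) : ℝ) * hT +
      ((2 * n + 1) * (4 * k + 2 * n + 5) : ℝ) * besselSqCoeff_succ n k
  rw [key]
  positivity

theorem sum_antidiagonal_besselCoeff_mul_pow (n : ℕ) (w : ℕ → ℝ) (x : ℝ) (k : ℕ) :
    ∑ p ∈ antidiagonal k, (besselCoeff n p.1 * w p.1 * x ^ (2 * p.1 + n)) *
      (besselCoeff n p.2 * w p.2 * x ^ (2 * p.2 + n)) =
    (∑ p ∈ antidiagonal k, (w p.1 * w p.2) * (besselCoeff n p.1 * besselCoeff n p.2)) *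
      x ^ (2 * k + 2 * n) := by
  rw [sum_mul]
  refine sum_congr rfl fun p hp => ?_
  rw [← HasAntidiagonal.mem_antidiagonal.mp hp]
  ring

theorem two_mul_besselI_le {n : ℕ} (hn : 1 ≤ n) {x : ℝ} (hx : 0 ≤ x) :
    2 * x * besselI n x ≤ besselI n x + 2 * (x * deriv (besselI n) x) := by
  have hM := summable_besselCoeff_mul_mul_pow n hx
  have hI := summable_besselCoeff_mul_pow n hx
  have hθ : Summable fun j => besselCoeff n j * (2 * j + n) * x ^ (2 * j + n) :=
    (hM.sub hI).congr fun j => by ring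
  have hP : Summable fun j => besselCoeff n j * (4 * j + 2 * n + 1) * x ^ (2 * j + n) :=
    (hI.add (hθ.mul_left 2)).congr fun j => by ring
  have hrhs : besselI n x + 2 * (x * deriv (besselI n) x) =
      ∑' j, besselCoeff n j * (4 * j + 2 * n + 1) * x ^ (2 * j + n) := by
    rw [mul_deriv_besselI, besselI_eq_tsum, ← tsum_mul_left, ← hI.tsum_add (hθ.mul_left 2)]
    congr 1 with j
    ring
  rw [hrhs, besselI_eq_tsum]
  refine mul_tsum_le_tsum_of_antidiagonal (by positivity)
    (fun j => by have := besselCoeff_pos n j; positivity)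
    (fun j => by have := besselCoeff_pos n j; positivity) hI hP fun k => ?_
  have hq := sum_antidiagonal_besselCoeff_mul_pow n (fun _ => 1) x k
  have hp := sum_antidiagonal_besselCoeff_mul_pow n (fun j => 4 * j + 2 * n + 1) x (k + 1)
  simp only [mul_one, one_mul] at hq
  rw [hq, hp]
  calc (2 * x) ^ 2 * (besselSqCoeff n k * x ^ (2 * k + 2 * n))
      = 4 * besselSqCoeff n k * x ^ (2 * (k + 1) + 2 * n) := by ring
    _ ≤ _ := mul_le_mul_of_nonneg_right (four_mul_besselSqCoeff_le hn k) (by positivity)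

theorem monotoneOn_sqrt_mul_exp_neg_mul_besselI_Icc (n : ℕ) :
    MonotoneOn (fun x : ℝ => √x * exp (-x) * besselI n x) (Set.Icc 0 (n + 1 / 2)) := by
  rintro x ⟨hx, -⟩ y ⟨hy, hyn⟩ hxy
  dsimp only
  simp only [besselI_eq_tsum, ← tsum_mul_left]
  refine Summable.tsum_le_tsum (fun j => ?_) ((summable_besselCoeff_mul_pow n hx).mul_left _)
    ((summable_besselCoeff_mul_pow n hy).mul_left _)
  have hterm := monotoneOn_sqrt_mul_exp_neg_mul_pow (2 * j + n)
    ⟨hx, by push_cast; linarith⟩ ⟨hy, by push_cast; linarith⟩ hxy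
  have := besselCoeff_pos n j
  dsimp only at hterm
  linear_combination besselCoeff n j * hterm

theorem monotoneOn_sqrt_mul_exp_neg_mul_besselI_Ici {n : ℕ} (hn : 1 ≤ n) :
    MonotoneOn (fun x : ℝ => √x * exp (-x) * besselI n x) (Set.Ici 0) := by
  have hderiv : ∀ x : ℝ, 0 < x → HasDerivAt (fun x : ℝ => √x * exp (-x) * besselI n x)
      (exp (-x) / (2 * √x) *
        (besselI n x + 2 * (x * deriv (besselI n) x) - 2 * x * besselI n x)) x := by
    intro x hx
    have hs : √x ^ 2 = x := sq_sqrt hx.le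
    have := sqrt_pos.mpr hx
    refine (((hasDerivAt_sqrt hx.ne').fun_mul (hasDerivAt_neg x).exp).fun_mul
      (differentiable_besselI n x).hasDerivAt).congr_deriv ?_
    field_simp
    rw [hs]
    ring
  have hcont : Continuous fun x : ℝ => √x * exp (-x) * besselI n x :=
    (continuous_sqrt.mul (continuous_neg.rexp)).mul (differentiable_besselI n).continuous
  refine monotoneOn_of_deriv_nonneg (convex_Ici 0) hcont.continuousOn ?_ ?_ <;>
    rw [interior_Ici]
  · exact fun x hx => (hderiv x hx).differentiableAt.differentiableWithinAt
  · intro x hx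
    rw [(hderiv x hx).deriv]
    have := sqrt_pos.mpr hx
    exact mul_nonneg (by positivity) (sub_nonneg.mpr (two_mul_besselI_le hn hx.le))

/-- The function `f_n(x) = √x e^{−x} I_n(x)` is monotonically increasing on
`[0, n + 1/2]` when `n = 0` or `n = 1`, and on all of `[0, ∞)` when `n ≥ 2`. -/
theorem besselI_sqrt_exp_monotone (n : ℕ) :
    (n ≤ 1 →
      MonotoneOn (fun x : ℝ => Real.sqrt x * Real.exp (-x) * besselI n x)
        (Set.Icc (0 : ℝ) ((n : ℝ) + 1 / 2))) ∧
    (2 ≤ n →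
      MonotoneOn (fun x : ℝ => Real.sqrt x * Real.exp (-x) * besselI n x)
        (Set.Ici (0 : ℝ))) :=
  ⟨fun _ => monotoneOn_sqrt_mul_exp_neg_mul_besselI_Icc n,
    fun hn => monotoneOn_sqrt_mul_exp_neg_mul_besselI_Ici (by omega)⟩
end

section
/- For every real number x ≥ 0, the doubly infinite series ∑_{n∈ℤ} e^{−2x} I_{|n|}(2x) n² converges and its sum equals exactly 2x. (Proposition '2nd.moment' of the paper.) -/
/-!
Substituting `(a, b) = (j + n⁺, j + n⁻)` turns `∑_{n ∈ ℤ} n² I_{|n|}(2x)` into the double series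
`∑_{a,b} (a - b)² x^a/a! · x^b/b!`, i.e. `e^{2x}` times the second moment of `A - B` for
independent Poisson variables of mean `x`. Writing `(a - b)² = a(a-1) + a + b(b-1) + b - 2ab` and
using the factorial moments `∑_n n(n-1)⋯(n-k+1) xⁿ/n! = xᵏ eˣ` gives `2x e^{2x}`.
-/

open Nat

theorem HasSum.mul_real {ι κ : Type*} {f : ι → ℝ} {g : κ → ℝ} {s t : ℝ} (hf : HasSum f s)
    (hg : HasSum g t) : HasSum (fun p : ι × κ => f p.1 * g p.2) (s * t) :=
  hf.mul hg (summable_mul_of_summable_norm hf.summable.norm hg.summable.norm)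

theorem hasSum_descFactorial_mul_pow_div_factorial (k : ℕ) (x : ℝ) :
    HasSum (fun n : ℕ => (n.descFactorial k : ℝ) * x ^ n / n !) (x ^ k * Real.exp x) := by
  have hexp : HasSum (fun n : ℕ => x ^ n / n !) (Real.exp x) := by
    rw [Real.exp_eq_exp_ℝ]
    exact NormedSpace.expSeries_div_hasSum_exp x
  have hlow : ∑ n ∈ Finset.range k, (n.descFactorial k : ℝ) * x ^ n / n ! = 0 :=
    Finset.sum_eq_zero fun n hn => by
      simp [descFactorial_eq_zero_iff_lt.2 (Finset.mem_range.1 hn)]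
  rw [← hasSum_nat_add_iff' k, hlow, sub_zero]
  refine (hexp.mul_left (x ^ k)).congr_fun fun n => ?_
  have hfact : ((n + k) ! : ℝ) = n ! * (n + k).descFactorial k := by
    rw [← factorial_mul_descFactorial (Nat.le_add_left k n), Nat.add_sub_cancel, cast_mul]
  have : (n ! : ℝ) ≠ 0 := by positivity
  have : ((n + k).descFactorial k : ℝ) ≠ 0 := by
    exact_mod_cast (descFactorial_pos.2 (Nat.le_add_left k n)).ne'
  rw [hfact, pow_add]
  field_simp

theorem hasSum_sq_sub_mul_pow_div_factorial (x : ℝ) :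
    HasSum (fun p : ℕ × ℕ => ((p.1 : ℝ) - p.2) ^ 2 * (x ^ p.1 / p.1 ! * (x ^ p.2 / p.2 !)))
      (2 * x * Real.exp (2 * x)) := by
  have moment := (hasSum_descFactorial_mul_pow_div_factorial · x)
  have h := (((((moment 2).mul_real (moment 0)).add ((moment 1).mul_real (moment 0))).add
    ((moment 0).mul_real (moment 2))).add ((moment 0).mul_real (moment 1))).add
    (((moment 1).mul_real (moment 1)).mul_left (-2))
  convert h.congr_fun fun p => ?_ using 1
  · rw [two_mul x, Real.exp_add]
    ring
  · simp only [cast_descFactorial_two, descFactorial_one, descFactorial_zero, cast_one]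
    ring

def subMinEquiv : ℕ × ℕ ≃ ℤ × ℕ where
  toFun p := ((p.1 : ℤ) - p.2, min p.1 p.2)
  invFun q := (q.2 + q.1.toNat, q.2 + (-q.1).toNat)
  left_inv p := by ext <;> dsimp <;> omega
  right_inv q := by ext <;> dsimp <;> omega

theorem sq_sub_mul_pow_div_factorial_comp_subMinEquiv_symm (x : ℝ) :
    (fun p : ℕ × ℕ => ((p.1 : ℝ) - p.2) ^ 2 * (x ^ p.1 / p.1 ! * (x ^ p.2 / p.2 !))) ∘
        subMinEquiv.symm =
      fun q : ℤ × ℕ =>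
        (q.1 : ℝ) ^ 2 * (x ^ (2 * q.2 + q.1.natAbs) / (q.2 ! * (q.2 + q.1.natAbs) !)) := by
  funext ⟨n, j⟩
  obtain ⟨m, rfl | rfl⟩ := Int.eq_nat_or_neg n
  · have : subMinEquiv.symm (m, j) = (j + m, j) := by simp [subMinEquiv]
    simp only [Function.comp_apply, this, Int.natAbs_natCast, Int.cast_natCast, cast_add]
    ring
  · have : subMinEquiv.symm (-m, j) = (j, j + m) := by simp [subMinEquiv]
    simp only [Function.comp_apply, this, Int.natAbs_neg, Int.natAbs_natCast, Int.cast_neg,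
      Int.cast_natCast, cast_add]
    ring

theorem besselI_two_mul (n : ℕ) (x : ℝ) :
    besselI n (2 * x) = ∑' j : ℕ, x ^ (2 * j + n) / (j ! * (j + n) !) := by
  simp [besselI]

theorem hasSum_besselI_natAbs_two_mul_mul_sq (x : ℝ) :
    HasSum (fun n : ℤ => besselI n.natAbs (2 * x) * (n : ℝ) ^ 2) (2 * x * Real.exp (2 * x)) := by
  have h := subMinEquiv.symm.hasSum_iff.2 (hasSum_sq_sub_mul_pow_div_factorial x)
  rw [sq_sub_mul_pow_div_factorial_comp_subMinEquiv_symm] at h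
  refine (h.prod_fiberwise fun n => (h.summable.prod_factor n).hasSum).congr_fun fun n => ?_
  rw [besselI_two_mul, mul_comm]
  exact tsum_mul_left.symm

theorem besselI_second_moment_general (x : ℝ) :
    Summable (fun n : ℤ => Real.exp (-(2 * x)) * besselI n.natAbs (2 * x) * (n : ℝ) ^ 2) ∧
    ∑' n : ℤ, Real.exp (-(2 * x)) * besselI n.natAbs (2 * x) * (n : ℝ) ^ 2 = 2 * x := by
  have h := (hasSum_besselI_natAbs_two_mul_mul_sq x).mul_left (Real.exp (-(2 * x)))
  rw [mul_left_comm, ← Real.exp_add, neg_add_cancel, Real.exp_zero, mul_one] at h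
  simp only [← mul_assoc] at h
  exact ⟨h.summable, h.tsum_eq⟩

/-- Second moment of the spectral measure of the SEP kernel: for every `x ≥ 0`,
the series `∑_{n ∈ ℤ} e^{−2x} I_{|n|}(2x) n²` converges and equals `2x`. -/
theorem besselI_second_moment (x : ℝ) (hx : 0 ≤ x) :
    Summable (fun n : ℤ => Real.exp (-(2 * x)) * besselI n.natAbs (2 * x) * (n : ℝ) ^ 2) ∧
    ∑' n : ℤ, Real.exp (-(2 * x)) * besselI n.natAbs (2 * x) * (n : ℝ) ^ 2 = 2 * x :=
  besselI_second_moment_general x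
end

section
/- For every real number a and every real number t, the doubly infinite series ∑_{n∈ℤ} e^{−2a²} I_{|n|}(2a²) e^{−2πint} (with terms in ℂ) converges absolutely and its sum equals exp(−4a² sin²(πt)). In particular, the squared exponential periodic kernel φ_a(t) = exp(−4a² sin²(πt)) is the Fourier transform of the symmetric finite discrete measure placing mass e^{−2a²} I_{|n|}(2a²) at the point 2πn for each n ∈ ℤ. (Lemma 'spectral.measure' of the paper, first part.) -/
/-!
With `u = (x/2) e^{-iθ}` and `v = (x/2) e^{iθ}` we have `e^{x cos θ} = e^u e^v`, and the double
series `∑ u^i v^j / (i! j!)` converges absolutely. Grouping its terms along the diagonals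
`i - j = n` gives `∑_k (x/2)^{2k+|n|} e^{-inθ} / (k! (k+|n|)!) = I_{|n|}(x) e^{-inθ}`.
Taking `x = 2a²`, `θ = 2πt` and using `e^{-2a²} e^{2a² cos 2πt} = e^{-4a² sin² πt}` gives the theorem.
-/

open Real

open Nat

/-- `(n, k)` corresponds to the pair `(i, j)` with `i - j = n` and `min i j = k`. -/
def intProdNatEquiv : ℤ × ℕ ≃ ℕ × ℕ where
  toFun p := (p.2 + p.1.toNat, p.2 + (-p.1).toNat)
  invFun q := ((q.1 : ℤ) - q.2, min q.1 q.2)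
  left_inv p := by ext <;> simp only <;> omega
  right_inv q := by ext <;> simp only <;> omega

theorem summable_norm_tsum_prod_of_summable_norm {β γ E : Type*} [NormedAddCommGroup E]
    [CompleteSpace E] {f : β × γ → E} (hf : Summable fun p => ‖f p‖) :
    Summable fun b => ‖∑' c, f (b, c)‖ :=
  hf.prod.of_nonneg_of_le (fun _ => norm_nonneg _) fun b =>
    norm_tsum_le_tsum_norm (hf.prod_factor b)

theorem factorial_add_toNat_mul_factorial_add_toNat_neg (k : ℕ) (n : ℤ) :
    (k + n.toNat)! * (k + (-n).toNat)! = k ! * (k + n.natAbs)! := by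
  obtain ⟨m, rfl | rfl⟩ := n.eq_nat_or_neg <;> simp [mul_comm]

noncomputable def expProductTerm (z w : ℂ) (q : ℕ × ℕ) : ℂ :=
  z ^ q.1 / q.1 ! * (w ^ q.2 / q.2 !)

theorem summable_norm_expProductTerm (z w : ℂ) :
    Summable fun q => ‖expProductTerm z w q‖ := by
  simpa only [expProductTerm, norm_mul] using
    (NormedSpace.norm_expSeries_div_summable z).mul_of_nonneg
      (NormedSpace.norm_expSeries_div_summable w) (fun _ => norm_nonneg _) fun _ => norm_nonneg _

theorem hasSum_expProductTerm (z w : ℂ) :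
    HasSum (expProductTerm z w) (Complex.exp z * Complex.exp w) := by
  have hz : HasSum (fun i : ℕ => z ^ i / i !) (Complex.exp z) := by
    rw [Complex.exp_eq_exp_ℂ]; exact NormedSpace.expSeries_div_hasSum_exp z
  have hw : HasSum (fun j : ℕ => w ^ j / j !) (Complex.exp w) := by
    rw [Complex.exp_eq_exp_ℂ]; exact NormedSpace.expSeries_div_hasSum_exp w
  exact hz.mul hw (f := fun i => z ^ i / i !) (g := fun j => w ^ j / j !)
    (summable_norm_expProductTerm z w).of_norm

theorem ofReal_mul_exp_pow_mul_ofReal_mul_exp_pow (r θ : ℝ) (n : ℤ) (k : ℕ) :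
    ((r : ℂ) * Complex.exp (-θ * Complex.I)) ^ (k + n.toNat) *
        ((r : ℂ) * Complex.exp (θ * Complex.I)) ^ (k + (-n).toNat) =
      ((r ^ (2 * k + n.natAbs) : ℝ) : ℂ) * Complex.exp (-(n * θ) * Complex.I) := by
  have hexp : Complex.exp (-θ * Complex.I) ^ (k + n.toNat) *
      Complex.exp (θ * Complex.I) ^ (k + (-n).toNat) = Complex.exp (-(n * θ) * Complex.I) := by
    rw [← Complex.exp_nat_mul, ← Complex.exp_nat_mul, ← Complex.exp_add]
    congr 1
    have hn : (n : ℂ) = n.toNat - (-n).toNat := by exact_mod_cast (Int.toNat_sub_toNat_neg n).symm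
    rw [hn]
    push_cast
    ring
  rw [mul_pow, mul_pow, mul_mul_mul_comm, ← pow_add, hexp, ← Int.toNat_add_toNat_neg_eq_natAbs n]
  push_cast
  ring

theorem tsum_expProductTerm_intProdNatEquiv (x θ : ℝ) (n : ℤ) :
    ∑' k, expProductTerm ((x / 2 : ℝ) * Complex.exp (-θ * Complex.I))
        ((x / 2 : ℝ) * Complex.exp (θ * Complex.I)) (intProdNatEquiv (n, k)) =
      besselI n.natAbs x * Complex.exp (-(n * θ) * Complex.I) := by
  have hterm (k : ℕ) : expProductTerm ((x / 2 : ℝ) * Complex.exp (-θ * Complex.I))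
      ((x / 2 : ℝ) * Complex.exp (θ * Complex.I)) (intProdNatEquiv (n, k)) =
        (((x / 2) ^ (2 * k + n.natAbs) / (k ! * (k + n.natAbs)! : ℝ) : ℝ) : ℂ) *
          Complex.exp (-(n * θ) * Complex.I) := by
    simp only [expProductTerm, intProdNatEquiv, Equiv.coe_fn_mk]
    rw [div_mul_div_comm (α := ℂ), ofReal_mul_exp_pow_mul_ofReal_mul_exp_pow,
      ← Nat.cast_mul, factorial_add_toNat_mul_factorial_add_toNat_neg]
    push_cast
    ring
  rw [tsum_congr hterm, tsum_mul_right, ← Complex.ofReal_tsum, besselI]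

theorem summable_norm_and_hasSum_besselI_mul_exp (x θ : ℝ) :
    (Summable fun n : ℤ => ‖(besselI n.natAbs x : ℂ) * Complex.exp (-(n * θ) * Complex.I)‖) ∧
      HasSum (fun n : ℤ => (besselI n.natAbs x : ℂ) * Complex.exp (-(n * θ) * Complex.I))
        (Complex.exp (x * Real.cos θ)) := by
  set u : ℂ := (x / 2 : ℝ) * Complex.exp (-θ * Complex.I)
  set v : ℂ := (x / 2 : ℝ) * Complex.exp (θ * Complex.I)
  set f : ℤ × ℕ → ℂ := fun p => expProductTerm u v (intProdNatEquiv p)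
  have hnorm : Summable fun p => ‖f p‖ :=
    intProdNatEquiv.summable_iff.mpr (summable_norm_expProductTerm u v)
  have hsum : HasSum f (Complex.exp (u + v)) := by
    rw [Complex.exp_add]
    exact intProdNatEquiv.hasSum_iff.mpr (hasSum_expProductTerm u v)
  have huv : u + v = x * Real.cos θ := by
    simp only [u, v, Complex.exp_mul_I, Complex.cos_neg, Complex.sin_neg]
    push_cast
    ring
  have hfibre (n : ℤ) : ∑' k, f (n, k) = besselI n.natAbs x * Complex.exp (-(n * θ) * Complex.I) :=
    tsum_expProductTerm_intProdNatEquiv x θ n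
  simp only [← hfibre, ← huv]
  exact ⟨summable_norm_tsum_prod_of_summable_norm hnorm,
    hsum.prod_fiberwise fun n => (hsum.summable.prod_factor n).hasSum⟩

/-- Spectral representation of the squared exponential periodic kernel: for all real `a, t`,
the series `∑_{n ∈ ℤ} e^{−2a²} I_{|n|}(2a²) e^{−2πint}` converges absolutely and sums to
`exp(−4a² sin²(πt))`; i.e. `φ_a(t) = exp(−4a² sin²(πt))` is the Fourier transform of the
symmetric finite discrete measure placing mass `e^{−2a²} I_{|n|}(2a²)` at `2πn`, `n ∈ ℤ`. -/
theorem sep_kernel_spectral_measure (a t : ℝ) :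
    Summable (fun n : ℤ =>
      ‖((Real.exp (-(2 * a ^ 2)) * besselI n.natAbs (2 * a ^ 2) : ℝ) : ℂ) *
        Complex.exp (-(2 * π * n * t) * Complex.I)‖) ∧
    ∑' n : ℤ, ((Real.exp (-(2 * a ^ 2)) * besselI n.natAbs (2 * a ^ 2) : ℝ) : ℂ) *
        Complex.exp (-(2 * π * n * t) * Complex.I) =
      ((Real.exp (-(4 * a ^ 2 * Real.sin (π * t) ^ 2)) : ℝ) : ℂ) := by
  obtain ⟨hnorm, hsum⟩ := summable_norm_and_hasSum_besselI_mul_exp (2 * a ^ 2) (2 * π * t)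
  have hterm (n : ℤ) : ((Real.exp (-(2 * a ^ 2)) * besselI n.natAbs (2 * a ^ 2) : ℝ) : ℂ) *
      Complex.exp (-(2 * π * n * t) * Complex.I) = Real.exp (-(2 * a ^ 2)) *
        (besselI n.natAbs (2 * a ^ 2) * Complex.exp (-(n * (2 * π * t : ℝ)) * Complex.I)) := by
    rw [show (2 * π * n * t : ℂ) = n * (2 * π * t : ℝ) by push_cast; ring, Complex.ofReal_mul]
    ring
  have hexp : Real.exp (-(2 * a ^ 2)) * Real.exp (2 * a ^ 2 * Real.cos (2 * π * t)) =
      Real.exp (-(4 * a ^ 2 * Real.sin (π * t) ^ 2)) := by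
    rw [← Real.exp_add, mul_assoc 2 π, Real.cos_two_mul_eq_one_sub]
    congr 1
    ring
  simp only [hterm]
  refine ⟨(hnorm.mul_left ‖(Real.exp (-(2 * a ^ 2)) : ℂ)‖).congr fun n => (norm_mul _ _).symm, ?_⟩
  rw [(hsum.mul_left _).tsum_eq, ← hexp]
  norm_cast
end

section
/- For every integer j ≥ 1, one has 8^{−j} · √((4j)!/(2j)!) / j! ≤ √e · 2^{1/4} · (2π)^{−3/4}. (Uniform bound on the rescaled spectral moments used in the entropy estimate, Lemma 'entropy.lambda', of the paper; proved via the two-sided Stirling bounds √(2π) n^{n+1/2} e^{−n} ≤ n! ≤ e n^{n+1/2} e^{−n}.) -/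
open Real

/-!
The left side is `√g(j)` with `g(j) = (4j)! / (64^j (2j)! (j!)²)`. Since
`g(j+1) / g(j) = (4j+1)(4j+3) / (16(j+1)²) ≤ 1`, `g` is antitone, so `g(j) ≤ g(1) = 3/16`;
no Stirling estimate is needed. Finally `3/16` lies below the square of the right side, which
after raising to the fourth power reduces to `9π³ ≤ 64e²`.
-/

noncomputable def rescaledMomentSq (j : ℕ) : ℝ :=
  ((4 * j).factorial : ℝ) / (64 ^ j * (2 * j).factorial * (j.factorial : ℝ) ^ 2)

lemma rescaledMomentSq_succ (j : ℕ) :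
    rescaledMomentSq (j + 1) =
      rescaledMomentSq j * ((4 * j + 1) * (4 * j + 3) / (16 * ((j : ℝ) + 1) ^ 2)) := by
  rw [rescaledMomentSq, rescaledMomentSq, show 4 * (j + 1) = 4 * j + 3 + 1 by ring,
    show 2 * (j + 1) = 2 * j + 1 + 1 by ring]
  push_cast [Nat.factorial_succ, pow_succ]
  field_simp
  ring

lemma rescaledMomentSq_antitone : Antitone rescaledMomentSq := by
  refine antitone_nat_of_succ_le fun j => ?_
  rw [rescaledMomentSq_succ]
  refine mul_le_of_le_one_right (by unfold rescaledMomentSq; positivity) ?_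
  rw [div_le_one (by positivity)]
  linarith

lemma rescaledMomentSq_one : rescaledMomentSq 1 = 3 / 16 := by
  norm_num [rescaledMomentSq, Nat.factorial]

lemma eight_zpow_neg_mul_sqrt_div_eq_sqrt_rescaledMomentSq (j : ℕ) :
    (8 : ℝ) ^ (-(j : ℤ)) * √(((4 * j).factorial : ℝ) / (2 * j).factorial) / j.factorial =
      √(rescaledMomentSq j) := by
  have h64 : (64 : ℝ) ^ j = ((8 : ℝ) ^ j) ^ 2 := by rw [← pow_mul, mul_comm, pow_mul]; norm_num
  rw [rescaledMomentSq, h64, show ((8 : ℝ) ^ j) ^ 2 * (2 * j).factorial * (j.factorial : ℝ) ^ 2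
      = (2 * j).factorial * (8 ^ j * j.factorial) ^ 2 by ring, ← div_div,
    Real.sqrt_div' (((4 * j).factorial : ℝ) / (2 * j).factorial) (by positivity),
    Real.sqrt_sq (by positivity), zpow_neg, zpow_natCast]
  field_simp

lemma moment_bound_pow_four :
    (√(exp 1) * (2 : ℝ) ^ ((1 : ℝ) / 4) * (2 * π) ^ (-(3 : ℝ) / 4)) ^ 4 =
      2 * exp 1 ^ 2 / (2 * π) ^ 3 := by
  have h2π : 0 ≤ 2 * π := by positivity
  have hexp : √(exp 1) ^ 4 = exp 1 ^ 2 := by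
    rw [show 4 = 2 * 2 by rfl, pow_mul, Real.sq_sqrt (exp_pos 1).le]
  have htwo : ((2 : ℝ) ^ ((1 : ℝ) / 4)) ^ 4 = 2 := by
    rw [← Real.rpow_natCast, ← Real.rpow_mul (by norm_num)]; norm_num
  have hpi : ((2 * π) ^ (-(3 : ℝ) / 4)) ^ 4 = ((2 * π) ^ 3)⁻¹ := by
    rw [← Real.rpow_natCast, ← Real.rpow_mul h2π]; norm_num [Real.rpow_neg h2π]
  rw [mul_pow, mul_pow, hexp, htwo, hpi]
  ring

lemma three_sixteenths_le_moment_bound_sq :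
    3 / 16 ≤ (√(exp 1) * (2 : ℝ) ^ ((1 : ℝ) / 4) * (2 * π) ^ (-(3 : ℝ) / 4)) ^ 2 := by
  rw [← pow_le_pow_iff_left₀ (by norm_num) (by positivity) two_ne_zero, ← pow_mul,
    moment_bound_pow_four, le_div_iff₀ (by positivity)]
  have he : 7 < exp 1 ^ 2 := by nlinarith [exp_one_gt_d9]
  have hπ : π ^ 3 < 3.15 ^ 3 := pow_lt_pow_left₀ pi_lt_d2 pi_pos.le three_ne_zero
  linarith

/-- Uniform bound on the rescaled spectral moments used in the entropy estimate:
for every integer `j ≥ 1`, `8^{−j} √((4j)!/(2j)!) / j! ≤ √e · 2^{1/4} · (2π)^{−3/4}`. -/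
theorem rescaled_moment_uniform_bound (j : ℕ) (hj : 1 ≤ j) :
    (8 : ℝ) ^ (-(j : ℤ)) *
        Real.sqrt ((Nat.factorial (4 * j) : ℝ) / (Nat.factorial (2 * j) : ℝ)) /
        (Nat.factorial j : ℝ) ≤
      Real.sqrt (Real.exp 1) * (2 : ℝ) ^ ((1 : ℝ) / 4) * (2 * π) ^ (-(3 : ℝ) / 4) := by
  rw [eight_zpow_neg_mul_sqrt_div_eq_sqrt_rescaledMomentSq, Real.sqrt_le_left (by positivity)]
  calc rescaledMomentSq j ≤ rescaledMomentSq 1 := rescaledMomentSq_antitone hj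
    _ = 3 / 16 := rescaledMomentSq_one
    _ ≤ _ := three_sixteenths_le_moment_bound_sq
end
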